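/- arXiv:nlin/0611046 — 5 statements merged into one kernel-verified Lean document; each statement's English description precedes it below -/
import Mathlib

section
/- Let p = (b_1,...,b_L) ∈ B_1^L be a state of the periodic box-ball system (N entries equal to (0,1), L ≥ 2N), and let l be a positive integer. Let v_l ∈ B_l be the outgoing carrier obtained by carrying u_l = (l,0) through p. Then the outgoing carrier obtained by carrying v_l itself through p is again v_l. (Consequently the time evolution T_l(p), defined as the output state of this second pass, is well defined.) -/
/-!
Periodic box-ball system.  An element of `B_l` is a pair `(x₁,x₂) ∈ ℕ²` with
`x₁ + x₂ = l`; a state is a list of elements of `B_1`, i.e. of `(1,0)` (empty box)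
and `(0,1)` (ball).
-/

/-- The combinatorial `R : B_l ⊗ B_1 → B_1 ⊗ B_a`.  `combR l u b = (b', u')`. -/
def combR (l : ℕ) (u b : ℕ × ℕ) : (ℕ × ℕ) × (ℕ × ℕ) :=
  if b = (1, 0) then
    if u = (l, 0) then ((1, 0), (l, 0)) else ((0, 1), (u.1 + 1, u.2 - 1))
  else
    if u = (0, l) then ((0, 1), (0, l)) else ((1, 0), (u.1 - 1, u.2 + 1))

/-- Carrying the element `c ∈ B_l` through the state `p`, i.e. successively applying
the combinatorial `R`.  Returns the pair (output state, outgoing carrier). -/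
def carry (l : ℕ) (c : ℕ × ℕ) : List (ℕ × ℕ) → List (ℕ × ℕ) × (ℕ × ℕ)
  | [] => ([], c)
  | b :: bs =>
    let r := combR l c b
    let rest := carry l r.2 bs
    (r.1 :: rest.1, rest.2)

/-- Ball count of the carrier after a pass, starting with `x` balls. -/
def bbPass (l : ℕ) : List (ℕ × ℕ) → ℕ → ℕ
  | [], x => x
  | b :: bs, x => bbPass l bs (if b = (1, 0) then x - 1 else min (x + 1) l)

lemma carry_snd (l : ℕ) (hl : 1 ≤ l) :
    ∀ (p : List (ℕ × ℕ)) (x : ℕ), (∀ b ∈ p, b = (1, 0) ∨ b = (0, 1)) →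
      x ≤ l → (carry l (l - x, x) p).2 = (l - bbPass l p x, bbPass l p x) := by
  intro p
  induction p with
  | nil => intro x _ hx; simp [carry, bbPass]
  | cons b bs ih =>
    intro x hB hx
    have hbs : ∀ b ∈ bs, b = (1, 0) ∨ b = (0, 1) := fun b hb => hB b (by simp [hb])
    rcases hB b (by simp) with hb | hb <;> subst hb
    · by_cases h : x = 0
      · subst h
        have heq : ((l - 0, 0) : ℕ × ℕ) = (l, 0) := by simp
        simp only [carry, combR, heq, if_pos rfl]
        simpa [bbPass] using ih 0 hbs (by omega)
      · have hne : ((l - x, x) : ℕ × ℕ) ≠ (l, 0) := by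
          intro hc
          have := congrArg Prod.snd hc
          simp at this; omega
        simp only [carry, combR, if_pos rfl, if_neg hne]
        have := ih (x - 1) hbs (by omega)
        simp only [bbPass, if_pos rfl]
        have hfst : l - x + 1 = l - (x - 1) := by omega
        rw [show ((l - x + 1, x - 1) : ℕ × ℕ) = (l - (x-1), x - 1) from by rw [hfst]]
        exact this
    · have hb10 : ¬ (((0,1) : ℕ × ℕ) = (1,0)) := by decide
      by_cases h : x = l
      · have heq : ((l - x, x) : ℕ × ℕ) = (0, l) := by rw [h]; simp
        simp only [carry, combR, heq, if_neg hb10, if_pos rfl]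
        have hmin : min (x + 1) l = l := by omega
        simp only [bbPass, if_neg hb10, hmin]
        simpa [heq] using ih l hbs (by omega)
      · have hne : ((l - x, x) : ℕ × ℕ) ≠ (0, l) := by
          intro hc
          have := congrArg Prod.fst hc
          simp at this; omega
        simp only [carry, combR, if_neg hb10, if_neg hne]
        have hmin : min (x + 1) l = x + 1 := by omega
        simp only [bbPass, if_neg hb10, hmin]
        have := ih (x + 1) hbs (by omega)
        rw [show ((l - x - 1, x + 1) : ℕ × ℕ) = (l - (x+1), x + 1) from by
          rw [Nat.sub_sub]]
        exact this

lemma bbPass_mono (l : ℕ) : ∀ (p : List (ℕ × ℕ)) (x y : ℕ), x ≤ y →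
    bbPass l p x ≤ bbPass l p y := by
  intro p
  induction p with
  | nil => intro x y h; simpa [bbPass]
  | cons b bs ih =>
    intro x y h
    simp only [bbPass]
    apply ih
    split <;> omega

lemma bbPass_le (l : ℕ) : ∀ (p : List (ℕ × ℕ)) (x : ℕ), x ≤ l → bbPass l p x ≤ l := by
  intro p
  induction p with
  | nil => intro x h; simpa [bbPass]
  | cons b bs ih =>
    intro x h
    simp only [bbPass]
    apply ih
    split <;> omega

lemma bbPass_key (l : ℕ) (hl : 1 ≤ l) :
    ∀ (p : List (ℕ × ℕ)), (∀ b ∈ p, b = (1, 0) ∨ b = (0, 1)) → ∀ x : ℕ,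
      (bbPass l p x : ℤ) ≤ max ((bbPass l p 0 : ℕ) : ℤ)
        ((x : ℤ) + (2 * (p.count ((0, 1) : ℕ × ℕ) : ℤ) - (p.length : ℤ))) := by
  intro p
  induction p with
  | nil => intro _ x; simp [bbPass]
  | cons b bs ih =>
    intro hB x
    have hbs : ∀ b ∈ bs, b = (1, 0) ∨ b = (0, 1) := fun b hb => hB b (by simp [hb])
    rcases hB b (by simp) with hb | hb <;> subst hb
    · -- empty box: step is x - 1
      have hcnt : (((1,0) : ℕ × ℕ) :: bs).count ((0,1) : ℕ × ℕ) = bs.count ((0,1) : ℕ × ℕ) := by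
        simp [List.count_cons]
      have hlen : (((1,0) : ℕ × ℕ) :: bs).length = bs.length + 1 := rfl
      simp only [bbPass, if_pos rfl]
      rw [hcnt, hlen]
      have h1 := ih hbs (x - 1)
      have h2 : ((x : ℤ) - 1) + (2 * (bs.count ((0,1):ℕ×ℕ) : ℤ) - bs.length)
          = (x : ℤ) + (2 * ((bs.count ((0,1):ℕ×ℕ) + 0 : ℕ) : ℤ) - ((bs.length + 1 : ℕ) : ℤ)) := by
        push_cast; ring
      rcases Nat.eq_zero_or_pos x with hx | hx
      · subst hx
        simp only [Nat.zero_sub] at h1 ⊢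
        push_cast at h1 ⊢
        omega
      · have hc : ((x - 1 : ℕ) : ℤ) = (x : ℤ) - 1 := by omega
        rw [hc] at h1
        push_cast at h1 ⊢
        omega
    · -- ball: step is min (x+1) l
      have h01 : ¬ (((0,1) : ℕ × ℕ) = (1,0)) := by decide
      have hcnt : (((0,1) : ℕ × ℕ) :: bs).count ((0,1) : ℕ × ℕ) = bs.count ((0,1) : ℕ × ℕ) + 1 := by
        simp [List.count_cons]
      have hlen : (((0,1) : ℕ × ℕ) :: bs).length = bs.length + 1 := rfl
      simp only [bbPass, if_neg h01]
      rw [hcnt, hlen]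
      have h1 : min (0 + 1) l = 1 := by omega
      rw [h1]
      have hmono : bbPass l bs 0 ≤ bbPass l bs 1 := bbPass_mono l bs 0 1 (by omega)
      have h3 : bbPass l bs (min (x+1) l) ≤ bbPass l bs (x+1) :=
        bbPass_mono l bs _ _ (by omega)
      have h4 := ih hbs (x + 1)
      push_cast at h4 ⊢
      omega


/-- If `v_l` is the outgoing carrier obtained by carrying
`u_l = (l,0)` through a state `p` of the periodic box-ball system
(entries in `B_1`, `N` balls, `L ≥ 2N`), then carrying `v_l` itself through `p`
again produces the outgoing carrier `v_l`.  Hence `T_l(p)` is well defined. -/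
theorem carry_outgoing_carrier_fixed (l : ℕ) (hl : 1 ≤ l)
    (p : List (ℕ × ℕ)) (hB : ∀ b ∈ p, b = (1, 0) ∨ b = (0, 1))
    (hLN : 2 * p.count ((0, 1) : ℕ × ℕ) ≤ p.length) :
    (carry l (carry l (l, 0) p).2 p).2 = (carry l (l, 0) p).2 := by
  have h1 := carry_snd l hl p 0 hB (by omega)
  simp only [Nat.sub_zero] at h1
  set m := bbPass l p 0 with hm
  have hml : m ≤ l := bbPass_le l p 0 (by omega)
  have h2 := carry_snd l hl p m hB hml
  rw [h1, h2]
  have hge : m ≤ bbPass l p m := bbPass_mono l p 0 m (by omega)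
  have hle := bbPass_key l hl p hB m
  have hfix : bbPass l p m = m := by
    have ht : (2 * (p.count ((0,1) : ℕ × ℕ) : ℤ) - (p.length : ℤ)) ≤ 0 := by
      omega
    omega
  rw [hfix]
end

section
/- For any state p = (b_1,...,b_L) of the periodic box-ball system (N entries equal to (0,1), L ≥ 2N), the time evolution T_1 is the cyclic shift: T_1(b_1,...,b_L) = (b_L, b_1, b_2, ..., b_{L-1}). -/
/-- The time evolution `T_l` of the periodic box-ball system: first carry
`u_l = (l,0)` through `p` to obtain the outgoing carrier `v_l`, then `T_l(p)` is the
output state obtained by carrying `v_l` through `p`. -/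
def Tl (l : ℕ) (p : List (ℕ × ℕ)) : List (ℕ × ℕ) :=
  (carry l (carry l (l, 0) p).2 p).1

lemma combR_one (c b : ℕ × ℕ) (hc : c = (1, 0) ∨ c = (0, 1))
    (hb : b = (1, 0) ∨ b = (0, 1)) : combR 1 c b = (c, b) := by
  rcases hc with rfl | rfl <;> rcases hb with rfl | rfl <;> decide

lemma carry_one (c : ℕ × ℕ) (hc : c = (1, 0) ∨ c = (0, 1)) (p : List (ℕ × ℕ))
    (hB : ∀ b ∈ p, b = (1, 0) ∨ b = (0, 1)) :
    carry 1 c p = ((c :: p).dropLast, (c :: p).getLastD (0, 0)) := by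
  induction p generalizing c with
  | nil => simp [carry]
  | cons b bs ih =>
    have hb := hB b (by simp)
    have htail := ih b hb (fun x hx => hB x (List.mem_cons_of_mem _ hx))
    simp only [carry, combR_one c b hc hb, htail]
    cases bs <;> simp [carry]

/-- For any state `p = (b₁,…,b_L)` of the periodic box-ball system
(entries in `B_1`, `N` balls, `L ≥ 2N`), the time evolution `T₁` is the cyclic shift
`(b₁,…,b_L) ↦ (b_L, b₁, …, b_{L-1})`, i.e. the left rotation by `L - 1`. -/
theorem Tl_one_eq_cyclic_shift (p : List (ℕ × ℕ))
    (hB : ∀ b ∈ p, b = (1, 0) ∨ b = (0, 1))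
    (hLN : 2 * p.count ((0, 1) : ℕ × ℕ) ≤ p.length) :
    Tl 1 p = p.rotate (p.length - 1) := by
  rcases List.eq_nil_or_concat p with rfl | ⟨xs, a, rfl⟩
  · simp [Tl, carry]
  · simp only [List.concat_eq_append] at hB hLN ⊢
    have ha : a = (1, 0) ∨ a = (0, 1) := hB a (by simp)
    have h1 : carry 1 (1, 0) (xs ++ [a]) =
        (((1, 0) :: (xs ++ [a])).dropLast, ((1, 0) :: (xs ++ [a])).getLastD (0, 0)) :=
      carry_one _ (Or.inl rfl) _ hB
    have hlast : (((1, 0) : ℕ × ℕ) :: (xs ++ [a])).getLastD (0, 0) = a := by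
      rw [List.getLastD_eq_getLast?,
        show ((1, 0) : ℕ × ℕ) :: (xs ++ [a]) = ((1, 0) :: xs) ++ [a] by simp,
        List.getLast?_concat]
      rfl
    rw [hlast] at h1
    have h2 : carry 1 a (xs ++ [a]) =
        ((a :: (xs ++ [a])).dropLast, (a :: (xs ++ [a])).getLastD (0, 0)) :=
      carry_one _ ha _ hB
    have : Tl 1 (xs ++ [a]) = (a :: (xs ++ [a])).dropLast := by
      rw [Tl, h1, h2]
    rw [this]
    have hdrop : ((a :: (xs ++ [a])).dropLast) = a :: xs := by
      rw [show a :: (xs ++ [a]) = (a :: xs) ++ [a] by simp, List.dropLast_concat]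
    rw [hdrop]
    have hlen : (xs ++ [a]).length - 1 = xs.length := by simp
    rw [hlen, List.rotate_eq_drop_append_take (by simp)]
    simp
end

section
/- Let Ω be a real symmetric positive definite g×g matrix, a ∈ ℝ^g, and let Θ_a be the associated ultradiscrete Riemann theta function. Then for every v ∈ Ωℤ^g (i.e., v = Ωu for some u ∈ ℤ^g) and every z ∈ ℝ^g, the quasi-periodicity Θ_a(z + v) = Θ_a(z) + vᵀΩ⁻¹(z + v/2) holds. -/
open Matrix

/-!
Ultradiscrete Riemann theta function.  `Ω` is a real symmetric positive definite
`g × g` matrix.  For characteristics `a ∈ ℝ^g` and `z ∈ ℝ^g` set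
`Θ_a(z) = -min_{n ∈ ℤ^g} { (n+a)ᵀ Ω (n+a) / 2 + (n+a)ᵀ z }`.
-/

/-- The quadratic form `(n+a)ᵀ Ω (n+a) / 2 + (n+a)ᵀ z` appearing in the exponents
of the Riemann theta series, evaluated at `n ∈ ℤ^g`. -/
noncomputable def qform {g : ℕ} (Ω : Matrix (Fin g) (Fin g) ℝ) (a z : Fin g → ℝ)
    (n : Fin g → ℤ) : ℝ :=
  (((fun i => (n i : ℝ)) + a) ⬝ᵥ Ω.mulVec ((fun i => (n i : ℝ)) + a)) / 2 +
    ((fun i => (n i : ℝ)) + a) ⬝ᵥ z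

/-- The ultradiscrete Riemann theta function with characteristic `a`:
`Θ_a(z) = -min_{n ∈ ℤ^g} { (n+a)ᵀ Ω (n+a) / 2 + (n+a)ᵀ z }` (the minimum is attained,
so it coincides with the infimum used here). -/
noncomputable def Theta {g : ℕ} (Ω : Matrix (Fin g) (Fin g) ℝ) (a z : Fin g → ℝ) : ℝ :=
  -sInf (Set.range (qform Ω a z))

/-- Cross-term symmetry for a symmetric matrix. -/
lemma symm_cross {g : ℕ} {A : Matrix (Fin g) (Fin g) ℝ} (hA : Aᵀ = A) (x y : Fin g → ℝ) :
    x ⬝ᵥ A.mulVec y = y ⬝ᵥ A.mulVec x := by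
  rw [Matrix.dotProduct_mulVec, ← Matrix.mulVec_transpose, hA, dotProduct_comm]

/-- The quadratic form of a positive definite symmetric matrix is bounded below. -/
lemma qform_bddBelow {g : ℕ} {Ω : Matrix (Fin g) (Fin g) ℝ} (hΩ : Ω.PosDef)
    (a z : Fin g → ℝ) : BddBelow (Set.range (qform Ω a z)) := by
  have hsym : Ωᵀ = Ω := hΩ.isHermitian
  have hdet : IsUnit Ω.det := isUnit_iff_ne_zero.2 (ne_of_gt hΩ.det_pos)
  set w : Fin g → ℝ := Ω⁻¹.mulVec z with hw
  have hwz : Ω.mulVec w = z := by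
    rw [hw, Matrix.mulVec_mulVec, Matrix.mul_nonsing_inv _ hdet, Matrix.one_mulVec]
  refine ⟨-(w ⬝ᵥ Ω.mulVec w) / 2, ?_⟩
  rintro r ⟨n, rfl⟩
  set x : Fin g → ℝ := (fun i => (n i : ℝ)) + a with hx
  have key : qform Ω a z n
      = ((x + w) ⬝ᵥ Ω.mulVec (x + w)) / 2 - (w ⬝ᵥ Ω.mulVec w) / 2 := by
    simp only [qform, ← hx, ← hwz, Matrix.mulVec_add, dotProduct_add,
      add_dotProduct]
    rw [symm_cross hsym w x]
    ring
  have h0 : 0 ≤ (x + w) ⬝ᵥ Ω.mulVec (x + w) := by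
    simpa using hΩ.posSemidef.dotProduct_mulVec_nonneg (x + w)
  rw [key]
  linarith

/-- Shift identity for the quadratic form. -/
lemma qform_shift {g : ℕ} {Ω : Matrix (Fin g) (Fin g) ℝ} (hsym : Ωᵀ = Ω)
    (a z : Fin g → ℝ) (u n : Fin g → ℤ) :
    qform Ω a (z + Ω.mulVec fun i => (u i : ℝ)) n
      = qform Ω a z (n + u)
        - ((fun i => (u i : ℝ)) ⬝ᵥ z
            + ((fun i => (u i : ℝ)) ⬝ᵥ Ω.mulVec fun i => (u i : ℝ)) / 2) := by
  set u' : Fin g → ℝ := fun i => (u i : ℝ) with hu'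
  set x : Fin g → ℝ := (fun i => (n i : ℝ)) + a with hx
  have hcast : (fun i => (((n + u) i : ℤ) : ℝ)) + a = x + u' := by
    funext i
    simp [hx, hu']
    ring
  simp only [qform, hcast, ← hx, Matrix.mulVec_add, dotProduct_add,
    add_dotProduct]
  rw [symm_cross hsym u' x]
  ring

/-- Quasi-periodicity of the ultradiscrete Riemann theta function:
for `Ω` real symmetric positive definite, any characteristic `a`, any
`v = Ω u ∈ Ω ℤ^g` and any `z ∈ ℝ^g`,
`Θ_a(z + v) = Θ_a(z) + vᵀ Ω⁻¹ (z + v/2)`. -/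
theorem theta_quasi_periodicity {g : ℕ} (Ω : Matrix (Fin g) (Fin g) ℝ)
    (hΩ : Ω.PosDef) (a z : Fin g → ℝ) (u : Fin g → ℤ) (v : Fin g → ℝ)
    (hv : v = Ω.mulVec fun i => (u i : ℝ)) :
    Theta Ω a (z + v) = Theta Ω a z + v ⬝ᵥ Ω⁻¹.mulVec (z + v / 2) := by
  have hsym : Ωᵀ = Ω := hΩ.isHermitian
  have hdet : IsUnit Ω.det := isUnit_iff_ne_zero.2 (ne_of_gt hΩ.det_pos)
  set u' : Fin g → ℝ := fun i => (u i : ℝ) with hu'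
  have hinvsym : Ω⁻¹ᵀ = Ω⁻¹ := by
    rw [Matrix.transpose_nonsing_inv, hsym]
  have hinv : Ω⁻¹.mulVec v = u' := by
    rw [hv, Matrix.mulVec_mulVec, Matrix.nonsing_inv_mul _ hdet, Matrix.one_mulVec]
  set c : ℝ := u' ⬝ᵥ z + (u' ⬝ᵥ Ω.mulVec u') / 2 with hc
  -- The right-hand correction term equals `c`.
  have hrhs : v ⬝ᵥ Ω⁻¹.mulVec (z + v / 2) = c := by
    rw [symm_cross hinvsym v (z + v / 2), hinv, dotProduct_comm, hc]
    have hv2 : z + v / 2 = z + (1 / 2 : ℝ) • v := by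
      funext i; simp [Pi.smul_apply]; ring
    rw [hv2, dotProduct_add, dotProduct_smul, hv]
    simp [smul_eq_mul]
    ring
  -- Range of the shifted form equals the translated range.
  have hrange : Set.range (qform Ω a (z + v))
      = (fun r => r + (-c)) '' Set.range (qform Ω a z) := by
    ext r
    constructor
    · rintro ⟨n, rfl⟩
      refine ⟨qform Ω a z (n + u), ⟨n + u, rfl⟩, ?_⟩
      have := qform_shift hsym a z u n
      rw [hv, this]
      ring
    · rintro ⟨_, ⟨m, rfl⟩, rfl⟩
      refine ⟨m - u, ?_⟩
      have := qform_shift hsym a z u (m - u)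
      rw [hv, this, sub_add_cancel]
      ring
  have hne : (Set.range (qform Ω a z)).Nonempty := ⟨qform Ω a z 0, ⟨0, rfl⟩⟩
  have hbdd : BddBelow (Set.range (qform Ω a z)) := qform_bddBelow hΩ a z
  have hsInf : sInf (Set.range (qform Ω a (z + v)))
      = sInf (Set.range (qform Ω a z)) + (-c) := by
    rw [hrange]
    have := (OrderIso.addRight (-c)).map_csInf' hne hbdd
    simp only [OrderIso.addRight_apply] at this
    exact this.symm
  simp only [Theta, hsInf, hrhs]
  ring
end

section
/- Let Ω be a real symmetric positive definite g×g matrix and a, z ∈ ℝ^g. Then the ultradiscretization limit holds: lim_{ε → 0+} ε · log ϑ_a(z) = Θ_a(z), where ϑ_a(z) = Σ_{n ∈ ℤ^g} exp(-((n+a)ᵀΩ(n+a)/2 + (n+a)ᵀz)/ε) and Θ_a(z) = -min_{n ∈ ℤ^g} { (n+a)ᵀΩ(n+a)/2 + (n+a)ᵀz }. -/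
open Matrix

lemma summable_exp_abs_int (t : ℝ) (ht : 0 < t) :
    Summable fun n : ℤ => Real.exp (-t * |(n : ℝ)|) := by
  have hgeo : Summable fun n : ℕ => Real.exp (-t) ^ n :=
    summable_geometric_of_lt_one (Real.exp_nonneg _) (Real.exp_lt_one_iff.mpr (by linarith))
  have key : ∀ n : ℕ, Real.exp (-t * |((n : ℤ) : ℝ)|) = Real.exp (-t) ^ n := by
    intro n
    rw [← Real.exp_nat_mul]
    norm_num [abs_of_nonneg, mul_comm]
  apply Summable.of_nat_of_neg
  · exact hgeo.congr fun n => (key n).symm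
  · refine hgeo.congr fun n => ?_
    rw [← key n]
    push_cast
    rw [abs_neg]

lemma summable_prod_exp_abs (g : ℕ) (t : ℝ) (ht : 0 < t) :
    Summable fun n : Fin g → ℤ => ∏ i, Real.exp (-t * |(n i : ℝ)|) := by
  induction g with
  | zero => exact Summable.of_finite
  | succ g ih =>
    have h := (summable_exp_abs_int t ht).mul_of_nonneg ih
      (fun n => Real.exp_nonneg _) (fun n => Finset.prod_nonneg fun i _ => Real.exp_nonneg _)
    have := h.comp_injective (Fin.consEquiv (fun _ : Fin (g+1) => ℤ)).symm.injective
    refine this.congr fun n => ?_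
    simp only [Function.comp, Fin.consEquiv_symm_apply]
    rw [Fin.prod_univ_succ]
    rfl

lemma posdef_coercive {g : ℕ} (Ω : Matrix (Fin g) (Fin g) ℝ) (hΩ : Ω.PosDef) :
    ∃ c > 0, ∀ x : Fin g → ℝ, c * ∑ i, x i ^ 2 ≤ x ⬝ᵥ Ω.mulVec x := by
  rcases Nat.eq_zero_or_pos g with hg | hg
  · subst hg
    refine ⟨1, one_pos, fun x => ?_⟩
    simp [dotProduct]
  · have hF : Continuous fun x : Fin g → ℝ => x ⬝ᵥ Ω.mulVec x := by
      simp only [dotProduct, Matrix.mulVec]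
      exact continuous_finset_sum _ fun i _ =>
        (continuous_apply i).mul (continuous_finset_sum _ fun j _ =>
          continuous_const.mul (continuous_apply j))
    have hf : Continuous fun x : EuclideanSpace ℝ (Fin g) =>
        (WithLp.equiv 2 _ x) ⬝ᵥ Ω.mulVec (WithLp.equiv 2 _ x) :=
      hF.comp (PiLp.continuous_ofLp _ _)
    have hne : (Metric.sphere (0 : EuclideanSpace ℝ (Fin g)) 1).Nonempty := by
      refine ⟨EuclideanSpace.single ⟨0, hg⟩ (1 : ℝ), ?_⟩
      simp [EuclideanSpace.norm_single]
    obtain ⟨u, hu, hmin⟩ :=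
      (isCompact_sphere (0 : EuclideanSpace ℝ (Fin g)) 1).exists_isMinOn hne hf.continuousOn
    have hu1 : ‖u‖ = 1 := by simpa using hu
    have hune : (WithLp.equiv 2 _ u) ≠ (0 : Fin g → ℝ) := by
      intro h
      have : u = 0 := by
        apply (WithLp.equiv 2 _).injective
        simpa using h
      rw [this] at hu1; simp at hu1
    set c := (WithLp.equiv 2 _ u) ⬝ᵥ Ω.mulVec (WithLp.equiv 2 _ u) with hc
    have hcpos : 0 < c := by
      have := hΩ.dotProduct_mulVec_pos hune
      simpa [hc] using this
    refine ⟨c, hcpos, fun x => ?_⟩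
    rcases eq_or_ne x 0 with rfl | hx
    · simp [dotProduct]
    · set X : EuclideanSpace ℝ (Fin g) := (WithLp.equiv 2 _).symm x with hX
      have hXne : X ≠ 0 := by
        intro h
        apply hx
        have := congrArg (WithLp.equiv 2 _) h
        simpa [hX] using this
      have hr : 0 < ‖X‖ := norm_pos_iff.mpr hXne
      have hmem : ‖X‖⁻¹ • X ∈ Metric.sphere (0 : EuclideanSpace ℝ (Fin g)) 1 := by
        simp [norm_smul, abs_of_nonneg (inv_nonneg.mpr hr.le), inv_mul_cancel₀ hr.ne']
      have hle : c ≤ (WithLp.equiv 2 (Fin g → ℝ)) (‖X‖⁻¹ • X) ⬝ᵥ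
          Ω.mulVec ((WithLp.equiv 2 (Fin g → ℝ)) (‖X‖⁻¹ • X)) := hmin hmem
      have hsmul : (WithLp.equiv 2 _ (‖X‖⁻¹ • X)) = ‖X‖⁻¹ • x := by
        simp [WithLp.ofLp_smul, hX]
      rw [hsmul] at hle
      have hexpand : (‖X‖⁻¹ • x) ⬝ᵥ Ω.mulVec (‖X‖⁻¹ • x)
          = ‖X‖⁻¹ * ‖X‖⁻¹ * (x ⬝ᵥ Ω.mulVec x) := by
        rw [Matrix.mulVec_smul, smul_dotProduct, dotProduct_smul]
        simp [smul_eq_mul]; ring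
      rw [hexpand] at hle
      have hnormsq : ‖X‖ ^ 2 = ∑ i, x i ^ 2 := by
        rw [EuclideanSpace.norm_eq]
        rw [Real.sq_sqrt (by positivity)]
        refine Finset.sum_congr rfl fun i _ => ?_
        simp only [Real.norm_eq_abs, sq_abs]; rfl
      have h2 : c * ‖X‖ ^ 2 ≤ x ⬝ᵥ Ω.mulVec x := by
        have := mul_le_mul_of_nonneg_right hle (by positivity : (0:ℝ) ≤ ‖X‖ ^ 2)
        calc c * ‖X‖ ^ 2 ≤ ‖X‖⁻¹ * ‖X‖⁻¹ * (x ⬝ᵥ Ω.mulVec x) * ‖X‖ ^ 2 := this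
          _ = (‖X‖⁻¹ * ‖X‖) * ((‖X‖⁻¹ * ‖X‖) * (x ⬝ᵥ Ω.mulVec x)) := by ring
          _ = x ⬝ᵥ Ω.mulVec x := by rw [inv_mul_cancel₀ hr.ne']; ring
      rw [hnormsq] at h2
      exact h2

lemma qform_lower {g : ℕ} (Ω : Matrix (Fin g) (Fin g) ℝ) (hΩ : Ω.PosDef) (a z : Fin g → ℝ) :
    ∃ s > 0, ∃ K : ℝ, ∀ n : Fin g → ℤ,
      s * (∑ i, |(n i : ℝ)|) - K ≤ qform Ω a z n := by
  obtain ⟨c, hc, hcoer⟩ := posdef_coercive Ω hΩ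
  set Z := Real.sqrt (∑ i, z i ^ 2) with hZ
  have hZ0 : 0 ≤ Z := Real.sqrt_nonneg _
  set A := ∑ i, |a i| with hA
  have hA0 : 0 ≤ A := Finset.sum_nonneg fun i _ => abs_nonneg _
  set sg := Real.sqrt g + 1 with hsg
  have hsg0 : 0 < sg := by positivity
  refine ⟨sg⁻¹, by positivity, (Z + 1) ^ 2 / (2 * c) + sg⁻¹ * A, fun n => ?_⟩
  set x : Fin g → ℝ := fun i => (n i : ℝ) + a i with hx
  have hqn : qform Ω a z n = (x ⬝ᵥ Ω.mulVec x) / 2 + x ⬝ᵥ z := rfl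
  set t := Real.sqrt (∑ i, x i ^ 2) with ht
  have ht0 : 0 ≤ t := Real.sqrt_nonneg _
  have htsq : t ^ 2 = ∑ i, x i ^ 2 := Real.sq_sqrt (by positivity)
  have h1 : c * t ^ 2 ≤ x ⬝ᵥ Ω.mulVec x := by rw [htsq]; exact hcoer x
  have h2 : -(Z * t) ≤ x ⬝ᵥ z := by
    have hcs := Finset.sum_mul_sq_le_sq_mul_sq Finset.univ x z
    have hdp : x ⬝ᵥ z = ∑ i, x i * z i := rfl
    have hZsq : Z ^ 2 = ∑ i, z i ^ 2 := Real.sq_sqrt (by positivity)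
    nlinarith [sq_nonneg (x ⬝ᵥ z + Z * t), sq_nonneg (x ⬝ᵥ z), mul_nonneg hZ0 ht0]
  have h3 : ∑ i, |x i| ≤ Real.sqrt g * t := by
    have hcs := Finset.sum_mul_sq_le_sq_mul_sq Finset.univ (fun _ : Fin g => (1:ℝ))
      (fun i => |x i|)
    simp only [one_mul, one_pow, sq_abs, Finset.sum_const, Finset.card_univ,
      Fintype.card_fin, nsmul_eq_mul] at hcs
    have h := Real.sqrt_le_sqrt hcs
    rw [Real.sqrt_sq (Finset.sum_nonneg fun i _ => abs_nonneg _)] at h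
    simpa [mul_one, ← ht] using h
  have h4 : ∑ i, |(n i : ℝ)| ≤ (∑ i, |x i|) + A := by
    rw [hA, ← Finset.sum_add_distrib]
    refine Finset.sum_le_sum fun i _ => ?_
    have : (n i : ℝ) = x i - a i := by rw [hx]; ring
    rw [this]
    exact abs_sub _ _
  have h5 : (c / 2) * t ^ 2 - Z * t ≥ t - (Z + 1) ^ 2 / (2 * c) := by
    have hK1 : (Z + 1) ^ 2 / (2 * c) * (2 * c) = (Z + 1) ^ 2 := by field_simp
    nlinarith [sq_nonneg (c * t - (Z + 1)), hc, hK1]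
  have h6 : sg⁻¹ * (∑ i, |(n i : ℝ)|) ≤ t + sg⁻¹ * A := by
    have hxa : ∑ i, |x i| ≤ sg * t := by
      have : Real.sqrt g * t ≤ sg * t := by
        apply mul_le_mul_of_nonneg_right _ ht0
        rw [hsg]; linarith
      linarith
    have h7 : sg⁻¹ * (∑ i, |x i|) ≤ t := by
      calc sg⁻¹ * (∑ i, |x i|) ≤ sg⁻¹ * (sg * t) :=
            mul_le_mul_of_nonneg_left hxa (by positivity)
        _ = t := by field_simp
    calc sg⁻¹ * (∑ i, |(n i : ℝ)|) ≤ sg⁻¹ * ((∑ i, |x i|) + A) :=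
          mul_le_mul_of_nonneg_left h4 (by positivity)
      _ = sg⁻¹ * (∑ i, |x i|) + sg⁻¹ * A := by ring
      _ ≤ t + sg⁻¹ * A := by linarith
  rw [hqn]
  nlinarith [h1, h2, h5, h6]

lemma summable_exp_qform {g : ℕ} (Ω : Matrix (Fin g) (Fin g) ℝ) (hΩ : Ω.PosDef)
    (a z : Fin g → ℝ) {ε : ℝ} (hε : 0 < ε) :
    Summable fun n : Fin g → ℤ => Real.exp (-qform Ω a z n / ε) := by
  obtain ⟨s, hs, K, hK⟩ := qform_lower Ω hΩ a z
  refine Summable.of_nonneg_of_le (fun n => (Real.exp_pos _).le) (fun n => ?_)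
    ((summable_prod_exp_abs g (s / ε) (by positivity)).mul_left (Real.exp (K / ε)))
  set S := ∑ i, |(n i : ℝ)| with hS
  have hS0 : 0 ≤ S := Finset.sum_nonneg fun i _ => abs_nonneg _
  have hexp : -qform Ω a z n / ε ≤ K / ε + ∑ i, (-(s / ε) * |(n i : ℝ)|) := by
    have h1 := hK n
    have h2 : -qform Ω a z n / ε ≤ (K - s * S) / ε :=
      (div_le_div_iff_of_pos_right hε).mpr (by linarith)
    have h3 : ∑ i, (-(s / ε) * |(n i : ℝ)|) = (-(s / ε)) * S := by
      rw [hS, Finset.mul_sum]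
    rw [h3]
    have h4 : (K - s * S) / ε = K / ε + (-(s / ε)) * S := by field_simp; ring
    linarith
  calc Real.exp (-qform Ω a z n / ε)
      ≤ Real.exp (K / ε + ∑ i, (-(s / ε) * |(n i : ℝ)|)) := Real.exp_le_exp.mpr hexp
    _ = Real.exp (K / ε) * ∏ i, Real.exp (-(s / ε) * |(n i : ℝ)|) := by
        rw [Real.exp_add, Real.exp_sum]

/-- Ultradiscretization limit: for `Ω` real symmetric positive
definite and `a, z ∈ ℝ^g`,
`lim_{ε → 0+} ε · log ϑ_a(z) = Θ_a(z)`, where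
`ϑ_a(z) = Σ_{n ∈ ℤ^g} exp(-((n+a)ᵀΩ(n+a)/2 + (n+a)ᵀz)/ε)`. -/
theorem theta_ultradiscretization {g : ℕ} (Ω : Matrix (Fin g) (Fin g) ℝ)
    (hΩ : Ω.PosDef) (a z : Fin g → ℝ) :
    Filter.Tendsto
      (fun ε : ℝ =>
        ε * Real.log (∑' n : Fin g → ℤ, Real.exp (-(qform Ω a z n) / ε)))
      (nhdsWithin 0 (Set.Ioi 0)) (nhds (Theta Ω a z)) := by
  set q := qform Ω a z with hq
  have hsum : ∀ {ε : ℝ}, 0 < ε → Summable fun n : Fin g → ℤ => Real.exp (-q n / ε) :=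
    fun hε => summable_exp_qform Ω hΩ a z hε
  have hrange : (Set.range q).Nonempty := ⟨q 0, ⟨0, rfl⟩⟩
  obtain ⟨s, hs, K, hK⟩ := qform_lower Ω hΩ a z
  have hbdd : BddBelow (Set.range q) := by
    refine ⟨-K, fun y hy => ?_⟩
    obtain ⟨n, rfl⟩ := hy
    have h1 := hK n
    have hS : 0 ≤ ∑ i, |(n i : ℝ)| := Finset.sum_nonneg fun i _ => abs_nonneg _
    have := mul_nonneg hs.le hS
    simp only [← hq] at h1
    linarith
  set m := sInf (Set.range q) with hm
  have hTheta : Theta Ω a z = -m := rfl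
  rw [hTheta]
  have htpos : ∀ {ε : ℝ}, 0 < ε → 0 < ∑' n : Fin g → ℤ, Real.exp (-q n / ε) :=
    fun {ε} hε => Summable.tsum_pos (hsum hε) (fun n => (Real.exp_pos _).le) 0 (Real.exp_pos _)
  refine tendsto_order.2 ⟨?_, ?_⟩
  · intro b hb
    have hmb : m < -b := by linarith
    obtain ⟨y, ⟨n₀, rfl⟩, hy⟩ := exists_lt_of_csInf_lt hrange hmb
    filter_upwards [self_mem_nhdsWithin] with ε hε
    have hε : (0:ℝ) < ε := hε
    have hle : Real.exp (-q n₀ / ε) ≤ ∑' n : Fin g → ℤ, Real.exp (-q n / ε) :=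
      Summable.le_tsum (hsum hε) n₀ fun n _ => (Real.exp_pos _).le
    have hlog : -q n₀ / ε ≤ Real.log (∑' n : Fin g → ℤ, Real.exp (-q n / ε)) := by
      have := (Real.log_le_log_iff (Real.exp_pos _) (htpos hε)).mpr hle
      rwa [Real.log_exp] at this
    have hfin : -q n₀ ≤ ε * Real.log (∑' n : Fin g → ℤ, Real.exp (-q n / ε)) := by
      have h := mul_le_mul_of_nonneg_left hlog hε.le
      have h2 : ε * (-q n₀ / ε) = -q n₀ := by field_simp
      linarith
    linarith
  · intro b hb
    set C := ∑' n : Fin g → ℤ, Real.exp (-(q n - m)) with hC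
    have hCsum : Summable fun n : Fin g → ℤ => Real.exp (-(q n - m)) := by
      refine ((hsum one_pos).mul_left (Real.exp m)).congr fun n => ?_
      rw [← Real.exp_add]
      congr 1
      field_simp
      ring
    have hCpos : 0 < C := Summable.tsum_pos hCsum (fun n => (Real.exp_pos _).le) 0 (Real.exp_pos _)
    have hub : ∀ ε : ℝ, 0 < ε → ε ≤ 1 →
        ε * Real.log (∑' n : Fin g → ℤ, Real.exp (-q n / ε)) ≤ -m + ε * Real.log C := by
      intro ε hε hε1
      have hterm : ∀ n : Fin g → ℤ,
          Real.exp (-q n / ε) ≤ Real.exp (-m / ε) * Real.exp (-(q n - m)) := by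
        intro n
        rw [← Real.exp_add]
        apply Real.exp_le_exp.mpr
        have hmn : m ≤ q n := csInf_le hbdd ⟨n, rfl⟩
        have hdiv : q n - m ≤ (q n - m) / ε := le_div_self (by linarith) hε hε1
        have hsplit : -q n / ε = -m / ε - (q n - m) / ε := by field_simp; ring
        rw [hsplit]
        linarith
      have hts : (∑' n : Fin g → ℤ, Real.exp (-q n / ε)) ≤ Real.exp (-m / ε) * C := by
        have := Summable.tsum_le_tsum hterm (hsum hε) (hCsum.mul_left _)
        rwa [tsum_mul_left] at this
      have hlog : Real.log (∑' n : Fin g → ℤ, Real.exp (-q n / ε)) ≤ -m / ε + Real.log C := by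
        have h1 := (Real.log_le_log_iff (htpos hε) (by positivity)).mpr hts
        rwa [Real.log_mul (Real.exp_ne_zero _) hCpos.ne', Real.log_exp] at h1
      have h2 := mul_le_mul_of_nonneg_left hlog hε.le
      have h3 : ε * (-m / ε + Real.log C) = -m + ε * Real.log C := by field_simp
      linarith
    have htend : Filter.Tendsto (fun ε : ℝ => -m + ε * Real.log C)
        (nhdsWithin 0 (Set.Ioi 0)) (nhds (-m)) := by
      have h0 : Filter.Tendsto (fun ε : ℝ => -m + ε * Real.log C) (nhds 0)
          (nhds (-m + 0 * Real.log C)) :=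
        (continuous_const.add (continuous_id.mul continuous_const)).tendsto 0
      simpa using h0.mono_left nhdsWithin_le_nhds
    filter_upwards [Ioo_mem_nhdsGT (by norm_num : (0:ℝ) < 1),
      htend.eventually_lt_const hb] with ε hεIoo hεb
    calc ε * Real.log (∑' n : Fin g → ℤ, Real.exp (-q n / ε))
        ≤ -m + ε * Real.log C := hub ε hεIoo.1 hεIoo.2.le
      _ < b := hεb
end

section
/- Fix a positive integer L, distinct positive integers i_1 < ... < i_g with 𝕀 = {i_1,...,i_g}, and multiplicities m_i ≥ 1 (i ∈ 𝕀). Let p_i = L - 2 Σ_{j∈𝕀} min(i,j) m_j and assume p_i ≥ 0 for all i ∈ 𝕀 and p_{i_g} > 0. Then (L / p_{i_g}) · Π_{i∈𝕀} C(p_i + m_i - 1, m_i) is a positive integer; that is, p_{i_g} divides L · Π_{i∈𝕀} C(p_i + m_i - 1, m_i) and the quotient is positive. -/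
open Matrix

/-!
Combinatorial Bethe ansatz data.  Fix a system size `L`, distinct positive integers
`i₁ < … < i_g` (encoded by a strictly monotone `ι : Fin g → ℕ` with positive values)
and multiplicities `m : Fin g → ℕ` with `m a ≥ 1`.
-/

/-- The vacancy number `p_i = L - 2 Σ_{j ∈ 𝕀} min(i,j) m_j`. -/
def vacancy (L g : ℕ) (ι m : Fin g → ℕ) (a : Fin g) : ℤ :=
  (L : ℤ) - 2 * ∑ b : Fin g, (min (ι a) (ι b) : ℤ) * m b

-- binomial identity: m * C(p+m-1, m) = p * C(p+m-1, m-1)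
lemma choose_key (p mm : ℕ) (h : 1 ≤ mm) :
    (mm : ℤ) * (Nat.choose (p + mm - 1) mm : ℤ)
      = (p : ℤ) * (Nat.choose (p + mm - 1) (mm - 1) : ℤ) := by
  obtain ⟨k, rfl⟩ : ∃ k, mm = k + 1 := ⟨mm - 1, by omega⟩
  have h2 : p + (k + 1) - 1 = p + k := by omega
  have h3 : k + 1 - 1 = k := by omega
  rw [h2, h3]
  have := Nat.choose_succ_right_eq (p + k) k
  have h4 : p + k - k = p := by omega
  rw [h4] at this
  have := congrArg (Nat.cast : ℕ → ℤ) this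
  push_cast at this
  push_cast
  linarith

example : True := trivial

lemma lemA (g : ℕ) (ι m : Fin g → ℕ) (P : ℤ) (p : Fin g → ℤ)
    (w : Fin g → Fin g → ℕ)
    (hp : ∀ a, p a = P + ∑ d : Fin g, 2 * (w a d : ℤ) * m d)
    (hw : ∀ a d, ¬ a < d → w a d = 0)
    (hpnn : ∀ a, 0 ≤ p a) (hm : ∀ a, 1 ≤ m a) :
    ∀ (k : ℕ) (a : Fin g), g - 1 - a.val ≤ k →
      P ∣ (m a : ℤ) *
        ∏ b ∈ Finset.Ici a, (Nat.choose ((p b).toNat + m b - 1) (m b) : ℤ) := by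
  intro k
  induction k using Nat.strong_induction_on with
  | _ k ih =>
    intro a ha
    set c : Fin g → ℤ := fun b => (Nat.choose ((p b).toNat + m b - 1) (m b) : ℤ) with hc
    have hsplit : ∏ b ∈ Finset.Ici a, c b = c a * ∏ b ∈ Finset.Ioi a, c b := by
      rw [← Finset.Ioi_insert, Finset.prod_insert Finset.notMem_Ioi_self]
    have hkey : (m a : ℤ) * c a
        = p a * (Nat.choose ((p a).toNat + m a - 1) (m a - 1) : ℤ) := by
      have := choose_key ((p a).toNat) (m a) (hm a)
      rw [Int.toNat_of_nonneg (hpnn a)] at this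
      exact this
    set c' : ℤ := (Nat.choose ((p a).toNat + m a - 1) (m a - 1) : ℤ)
    have expand : (m a : ℤ) * ∏ b ∈ Finset.Ici a, c b
        = P * (c' * ∏ b ∈ Finset.Ioi a, c b)
          + ∑ d : Fin g, (2 * (w a d : ℤ) * m d) * (c' * ∏ b ∈ Finset.Ioi a, c b) := by
      rw [hsplit, ← mul_assoc, hkey, hp a, add_mul, add_mul, Finset.sum_mul,
        Finset.sum_mul]
      congr 1
      · ring
      · exact Finset.sum_congr rfl fun d _ => by ring
    rw [expand]
    refine dvd_add (Dvd.intro _ rfl) (Finset.dvd_sum ?_)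
    intro d _
    by_cases hlt : a < d
    · -- use IH at d
      have hsub : Finset.Ici d ⊆ Finset.Ioi a := by
        intro b hb
        rw [Finset.mem_Ici] at hb
        exact Finset.mem_Ioi.2 (lt_of_lt_of_le hlt hb)
      have hprod : ∏ b ∈ Finset.Ioi a, c b
          = (∏ b ∈ Finset.Ioi a \ Finset.Ici d, c b) * ∏ b ∈ Finset.Ici d, c b :=
        (Finset.prod_sdiff hsub).symm
      have hk : g - 1 - d.val < k := by
        have h1 : a.val < d.val := hlt
        have h2 : d.val ≤ g - 1 := by omega
        omega
      have hdvd : P ∣ (m d : ℤ) * ∏ b ∈ Finset.Ici d, c b :=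
        ih (g - 1 - d.val) hk d le_rfl
      have : (2 * (w a d : ℤ) * m d) * (c' * ∏ b ∈ Finset.Ioi a, c b)
          = (2 * (w a d : ℤ) * (c' * ∏ b ∈ Finset.Ioi a \ Finset.Ici d, c b))
            * ((m d : ℤ) * ∏ b ∈ Finset.Ici d, c b) := by
        rw [hprod]; ring
      rw [this]
      exact hdvd.mul_left _
    · rw [hw a d hlt]
      simp


/-- Under the configuration condition `p_i ≥ 0` (for all `i ∈ 𝕀`)
and `p_{i_g} > 0`, the quantity `(L/p_{i_g}) Π_{i∈𝕀} C(p_i+m_i-1, m_i)` is a positive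
integer: `p_{i_g}` divides `L · Π_{i∈𝕀} C(p_i+m_i-1, m_i)` and the quotient is
positive. -/
theorem card_angle_variables_pos_int (L g : ℕ) (hL : 0 < L) (hg : 0 < g)
    (ι : Fin g → ℕ) (hι : StrictMono ι) (hιpos : ∀ a, 0 < ι a)
    (m : Fin g → ℕ) (hm : ∀ a, 1 ≤ m a) (hconf : ∀ a, 0 ≤ vacancy L g ι m a)
    (hlast : 0 < vacancy L g ι m ⟨g - 1, by omega⟩) :
    vacancy L g ι m ⟨g - 1, by omega⟩ ∣
        (L : ℤ) * ∏ a : Fin g,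
          (Nat.choose ((vacancy L g ι m a).toNat + m a - 1) (m a) : ℤ) ∧
      0 < ((L : ℤ) * ∏ a : Fin g,
            (Nat.choose ((vacancy L g ι m a).toNat + m a - 1) (m a) : ℤ)) /
          vacancy L g ι m ⟨g - 1, by omega⟩ := by
  have hglt : g - 1 < g := by omega
  set lastI : Fin g := ⟨g - 1, hglt⟩ with hlastI
  set p : Fin g → ℤ := vacancy L g ι m with hpdef
  set P : ℤ := p lastI with hPdef
  set c : Fin g → ℤ :=
    fun b => (Nat.choose ((p b).toNat + m b - 1) (m b) : ℤ) with hcdef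
  have hPpos : 0 < P := hlast
  -- everyone is ≤ lastI
  have hle : ∀ b : Fin g, ι b ≤ ι lastI := by
    intro b
    exact hι.monotone (Fin.le_def.2 (show b.val ≤ g - 1 from Nat.le_sub_one_of_lt b.isLt))
  -- min facts (integer casts)
  have hminlast : ∀ b : Fin g, (min (ι lastI) (ι b) : ℤ) = (ι b : ℤ) := by
    intro b
    have := min_eq_right (hle b)
    exact_mod_cast congrArg (Nat.cast : ℕ → ℤ) this
  -- the weight function
  set w : Fin g → Fin g → ℕ := fun a d => ι d - min (ι a) (ι d) with hwdef
  have hw : ∀ a d : Fin g, ¬ a < d → w a d = 0 := by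
    intro a d hnot
    have : d ≤ a := not_lt.1 hnot
    have : ι d ≤ ι a := hι.monotone this
    simp [hwdef, min_eq_right this]
  have hwcast : ∀ a d : Fin g, (w a d : ℤ) = (ι d : ℤ) - (min (ι a) (ι d) : ℤ) := by
    intro a d
    have h1 : min (ι a) (ι d) ≤ ι d := min_le_right _ _
    simp [hwdef, Nat.cast_sub h1]
  -- vacancy recursion
  have hp : ∀ a : Fin g, p a = P + ∑ d : Fin g, 2 * (w a d : ℤ) * m d := by
    intro a
    have e1 : ∑ d : Fin g, 2 * (w a d : ℤ) * m d
        = 2 * ∑ d : Fin g, (ι d : ℤ) * m d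
          - 2 * ∑ d : Fin g, (min (ι a) (ι d) : ℤ) * m d := by
      rw [Finset.mul_sum, Finset.mul_sum, ← Finset.sum_sub_distrib]
      exact Finset.sum_congr rfl fun d _ => by rw [hwcast]; ring
    have e2 : ∑ d : Fin g, (min (ι lastI) (ι d) : ℤ) * m d
        = ∑ d : Fin g, (ι d : ℤ) * m d :=
      Finset.sum_congr rfl fun d _ => by rw [hminlast]
    rw [e1]
    show vacancy L g ι m a = vacancy L g ι m lastI + _
    unfold vacancy
    rw [e2]
    ring
  have hdvdA := lemA g ι m P p w hp hw hconf hm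
  -- L = P + Σ 2 ι m
  have hLr : (L : ℤ) = P + ∑ b : Fin g, 2 * (ι b : ℤ) * m b := by
    have e2 : ∑ d : Fin g, (min (ι lastI) (ι d) : ℤ) * m d
        = ∑ d : Fin g, (ι d : ℤ) * m d :=
      Finset.sum_congr rfl fun d _ => by rw [hminlast]
    have : P = (L : ℤ) - 2 * ∑ d : Fin g, (ι d : ℤ) * m d := by
      show vacancy L g ι m lastI = _
      unfold vacancy
      rw [e2]
    rw [this, Finset.mul_sum]
    have : ∑ b : Fin g, 2 * (ι b : ℤ) * m b
        = ∑ b : Fin g, 2 * ((ι b : ℤ) * m b) :=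
      Finset.sum_congr rfl fun d _ => by ring
    rw [this, ← Finset.mul_sum]
    ring
  -- main divisibility
  have hdvd : P ∣ (L : ℤ) * ∏ a : Fin g, c a := by
    have expand : (L : ℤ) * ∏ a : Fin g, c a
        = P * ∏ a : Fin g, c a
          + ∑ b : Fin g, (2 * (ι b : ℤ)) *
              ((∏ a ∈ Finset.univ \ Finset.Ici b, c a) *
                ((m b : ℤ) * ∏ a ∈ Finset.Ici b, c a)) := by
      rw [hLr, add_mul, Finset.sum_mul]
      congr 1
      refine Finset.sum_congr rfl fun b _ => ?_
      rw [← Finset.prod_sdiff (Finset.subset_univ (Finset.Ici b))]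
      ring
    rw [expand]
    refine dvd_add (Dvd.intro _ rfl) (Finset.dvd_sum fun b _ => ?_)
    exact ((hdvdA (g - 1) b (by omega)).mul_left _).mul_left _
  -- positivity
  have hppos : ∀ b : Fin g, 0 < p b := by
    intro b
    have := hp b
    have hnn : 0 ≤ ∑ d : Fin g, 2 * (w b d : ℤ) * m d :=
      Finset.sum_nonneg fun d _ => by positivity
    omega
  have hcpos : ∀ b : Fin g, 0 < c b := by
    intro b
    have h1 : ((p b).toNat : ℤ) = p b := Int.toNat_of_nonneg (hconf b)
    have h2 : 0 < (p b).toNat := by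
      have := hppos b
      omega
    have : m b ≤ (p b).toNat + m b - 1 := by omega
    have := Nat.choose_pos this
    show (0:ℤ) < (Nat.choose ((p b).toNat + m b - 1) (m b) : ℤ)
    exact_mod_cast this
  have hprodpos : 0 < ∏ a : Fin g, c a :=
    Finset.prod_pos fun b _ => hcpos b
  have hLppos : 0 < (L : ℤ) * ∏ a : Fin g, c a := by
    have : (0 : ℤ) < L := by exact_mod_cast hL
    positivity
  obtain ⟨t, ht⟩ := hdvd
  have hplemma : 0 < ((L : ℤ) * ∏ a : Fin g, c a) / P := by
    rw [ht, Int.mul_ediv_cancel_left _ (ne_of_gt hPpos)]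
    nlinarith [ht, hLppos, hPpos]
  exact ⟨⟨t, ht⟩, hplemma⟩
end
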